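/- Let f : [a,b] → ℝ with f' continuous on [a,b] and f'' bounded on (a,b), and suppose G is an antiderivative of x ↦ sqrt(1 + f'(x)²) on [a,b]. Then the uniform polygonal lengths L_n converge to G(b) − G(a). -/

import Mathlib

/-!
By the mean value theorem, on each cell `[x, y]` of the partition the chord of `f` has length
`(y - x) √(1 + f'(c)²)` and the increment of `G` is `(y - x) √(1 + f'(d)²)` for some
`c, d ∈ (x, y)`. Since `u ↦ √(1 + u²)` is `1`-Lipschitz and `f'` is `M`-Lipschitz, the two
differ by at most `M (y - x)²`, so over the uniform partition into `n` cells the total error is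
at most `M (b - a)² / n`.
-/

open Real Filter Finset Set

lemma abs_sqrt_one_add_sq_sub_sqrt_one_add_sq_le (u v : ℝ) :
    |√(1 + u ^ 2) - √(1 + v ^ 2)| ≤ |u - v| := by
  -- `√(1 + u²) = ‖1 + u i‖`, so this is the reverse triangle inequality in `ℂ`.
  have h := abs_norm_sub_norm_le ((1 : ℝ) + u * Complex.I) ((1 : ℝ) + v * Complex.I)
  rwa [Complex.norm_add_mul_I, Complex.norm_add_mul_I, one_pow,
    show ((1 : ℝ) + u * Complex.I : ℂ) - ((1 : ℝ) + v * Complex.I) =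
      ((u - v : ℝ) : ℂ) * Complex.I by push_cast; ring,
    norm_mul, Complex.norm_I, mul_one, Complex.norm_real, Real.norm_eq_abs] at h

lemma abs_chord_length_sub_le {f f' f'' G : ℝ → ℝ} {x y M : ℝ} (hxy : x < y)
    (hf : ∀ z ∈ Icc x y, HasDerivAt f (f' z) z)
    (hf' : ∀ z ∈ Ioo x y, HasDerivAt f' (f'' z) z)
    (hM : ∀ z ∈ Ioo x y, |f'' z| ≤ M)
    (hG : ∀ z ∈ Icc x y, HasDerivAt G (√(1 + f' z ^ 2)) z) :
    |√((y - x) ^ 2 + (f y - f x) ^ 2) - (G y - G x)| ≤ M * (y - x) ^ 2 := by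
  have hyx : 0 < y - x := sub_pos.mpr hxy
  obtain ⟨c, hc, hfc⟩ := exists_hasDerivAt_eq_slope f f' hxy
    (fun z hz => (hf z hz).continuousAt.continuousWithinAt)
    (fun z hz => hf z (Ioo_subset_Icc_self hz))
  obtain ⟨d, hd, hGd⟩ := exists_hasDerivAt_eq_slope G (fun z => √(1 + f' z ^ 2)) hxy
    (fun z hz => (hG z hz).continuousAt.continuousWithinAt)
    (fun z hz => hG z (Ioo_subset_Icc_self hz))
  have hf_incr : f y - f x = (y - x) * f' c := by rw [hfc]; field_simp
  have hG_incr : G y - G x = (y - x) * √(1 + f' d ^ 2) := by rw [hGd]; field_simp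
  have hchord : √((y - x) ^ 2 + (f y - f x) ^ 2) = (y - x) * √(1 + f' c ^ 2) := by
    rw [hf_incr, show (y - x) ^ 2 + ((y - x) * f' c) ^ 2 = (y - x) ^ 2 * (1 + f' c ^ 2) by ring,
      sqrt_mul (sq_nonneg _), sqrt_sq hyx.le]
  have hlip : |f' c - f' d| ≤ M * |c - d| := by
    simpa only [Real.norm_eq_abs] using
      (convex_Ioo x y).norm_image_sub_le_of_norm_hasDerivWithin_le
        (fun z hz => (hf' z hz).hasDerivWithinAt)
        (fun z hz => (hM z hz).trans_eq' (norm_eq_abs _)) hd hc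
  have hM0 : 0 ≤ M := (abs_nonneg _).trans (hM c hc)
  have hcd : |c - d| ≤ y - x :=
    abs_sub_le_iff.mpr ⟨by linarith [hc.2, hd.1], by linarith [hc.1, hd.2]⟩
  calc |√((y - x) ^ 2 + (f y - f x) ^ 2) - (G y - G x)|
      = (y - x) * |√(1 + f' c ^ 2) - √(1 + f' d ^ 2)| := by
        rw [hchord, hG_incr, ← mul_sub, abs_mul, abs_of_pos hyx]
    _ ≤ (y - x) * (M * (y - x)) := by
        gcongr
        exact (abs_sqrt_one_add_sq_sub_sqrt_one_add_sq_le _ _).trans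
          (hlip.trans (mul_le_mul_of_nonneg_left hcd hM0))
    _ = M * (y - x) ^ 2 := by ring

noncomputable def uniformPolygonLength (f : ℝ → ℝ) (a b : ℝ) (n : ℕ) : ℝ :=
  ∑ k ∈ range n, √(((b - a) / n) ^ 2 +
    (f (a + (k + 1) * ((b - a) / n)) - f (a + k * ((b - a) / n))) ^ 2)

lemma abs_uniformPolygonLength_sub_le {f f' f'' G : ℝ → ℝ} {a b M : ℝ} (hab : a < b)
    (hf : ∀ x ∈ Icc a b, HasDerivAt f (f' x) x)
    (hf' : ∀ x ∈ Ioo a b, HasDerivAt f' (f'' x) x)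
    (hM : ∀ x ∈ Ioo a b, |f'' x| ≤ M)
    (hG : ∀ x ∈ Icc a b, HasDerivAt G (√(1 + f' x ^ 2)) x) {n : ℕ} (hn : 0 < n) :
    |uniformPolygonLength f a b n - (G b - G a)| ≤ M * (b - a) ^ 2 / n := by
  have hn' : (0 : ℝ) < n := Nat.cast_pos.mpr hn
  set h := (b - a) / n with h_def
  have hh : 0 < h := div_pos (sub_pos.mpr hab) hn'
  set x : ℕ → ℝ := fun k => a + k * h with x_def
  have hx_succ (k : ℕ) : x (k + 1) - x k = h := by simp only [x_def]; push_cast; ring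
  have hx_mem {k : ℕ} (hk : k ≤ n) : x k ∈ Icc a b := by
    have h0 : 0 ≤ (k : ℝ) * h := by positivity
    have h1 : (k : ℝ) * h ≤ b - a :=
      calc (k : ℝ) * h ≤ n * h := by gcongr
        _ = b - a := mul_div_cancel₀ _ hn'.ne'
    simp only [x_def, Set.mem_Icc]
    constructor <;> linarith
  have hcell_Icc {k : ℕ} (hk : k < n) : Icc (x k) (x (k + 1)) ⊆ Icc a b :=
    Icc_subset_Icc (hx_mem hk.le).1 (hx_mem hk).2
  have hcell_Ioo {k : ℕ} (hk : k < n) : Ioo (x k) (x (k + 1)) ⊆ Ioo a b :=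
    Ioo_subset_Ioo (hx_mem hk.le).1 (hx_mem hk).2
  have htelescope : G b - G a = ∑ k ∈ range n, (G (x (k + 1)) - G (x k)) := by
    rw [sum_range_sub (fun k => G (x k))]
    simp only [x_def, h_def, CharP.cast_eq_zero, zero_mul, add_zero, mul_div_cancel₀ _ hn'.ne',
      add_sub_cancel]
  have hchord (k : ℕ) (hk : k ∈ range n) :
      |√(h ^ 2 + (f (x (k + 1)) - f (x k)) ^ 2) - (G (x (k + 1)) - G (x k))| ≤ M * h ^ 2 := by
    have hk := mem_range.mp hk
    have hxx : x k < x (k + 1) := sub_pos.mp (hx_succ k ▸ hh)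
    rw [← hx_succ k]
    exact abs_chord_length_sub_le hxx (fun z hz => hf z (hcell_Icc hk hz))
      (fun z hz => hf' z (hcell_Ioo hk hz)) (fun z hz => hM z (hcell_Ioo hk hz))
      (fun z hz => hG z (hcell_Icc hk hz))
  have hlength : uniformPolygonLength f a b n =
      ∑ k ∈ range n, √(h ^ 2 + (f (x (k + 1)) - f (x k)) ^ 2) := by
    simp only [uniformPolygonLength, x_def]
    push_cast
    rfl
  calc |uniformPolygonLength f a b n - (G b - G a)|
      = |∑ k ∈ range n,
          (√(h ^ 2 + (f (x (k + 1)) - f (x k)) ^ 2) - (G (x (k + 1)) - G (x k)))| := by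
        rw [hlength, htelescope, ← sum_sub_distrib]
    _ ≤ ∑ k ∈ range n, M * h ^ 2 := (abs_sum_le_sum_abs _ _).trans (sum_le_sum hchord)
    _ = M * (b - a) ^ 2 / n := by
        rw [sum_const, card_range, nsmul_eq_mul, h_def]
        field_simp

theorem stmt_5_general (a b M : ℝ) (hab : a < b) (f f' f'' G : ℝ → ℝ)
    (hf : ∀ x ∈ Set.Icc a b, HasDerivAt f (f' x) x)
    (hf' : ∀ x ∈ Set.Ioo a b, HasDerivAt f' (f'' x) x)
    (hM : ∀ x ∈ Set.Ioo a b, |f'' x| ≤ M)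
    (hG : ∀ x ∈ Set.Icc a b, HasDerivAt G (Real.sqrt (1 + f' x ^ 2)) x) :
    Filter.Tendsto
      (fun n : ℕ => ∑ k ∈ Finset.range n,
        Real.sqrt (((b - a) / n)^2 +
          (f (a + (k + 1) * ((b - a) / n)) - f (a + k * ((b - a) / n)))^2))
      Filter.atTop (nhds (G b - G a)) := by
  change Tendsto (uniformPolygonLength f a b) atTop (nhds (G b - G a))
  rw [tendsto_iff_norm_sub_tendsto_zero]
  refine squeeze_zero_norm' ?_ (tendsto_const_div_atTop_nhds_zero_nat (M * (b - a) ^ 2))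
  filter_upwards [eventually_gt_atTop 0] with n hn
  rw [norm_norm]
  exact abs_uniformPolygonLength_sub_le hab hf hf' hM hG hn

theorem stmt_5 (a b M : ℝ) (hab : a < b) (f f' f'' G : ℝ → ℝ)
    (hf : ∀ x ∈ Set.Icc a b, HasDerivAt f (f' x) x)
    (hf'cont : ContinuousOn f' (Set.Icc a b))
    (hf' : ∀ x ∈ Set.Ioo a b, HasDerivAt f' (f'' x) x)
    (hM : ∀ x ∈ Set.Ioo a b, |f'' x| ≤ M)
    (hG : ∀ x ∈ Set.Icc a b, HasDerivAt G (Real.sqrt (1 + f' x ^ 2)) x) :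
    Filter.Tendsto
      (fun n : ℕ => ∑ k ∈ Finset.range n,
        Real.sqrt (((b - a) / n)^2 +
          (f (a + (k + 1) * ((b - a) / n)) - f (a + k * ((b - a) / n)))^2))
      Filter.atTop (nhds (G b - G a)) :=
  stmt_5_general a b M hab f f' f'' G hf hf' hM hG
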